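/- arXiv:2305.04178 — 5 statements merged into one kernel-verified Lean document; each statement's English description precedes it below -/
import Mathlib

section
/- Define f on partitions by: f of the empty partition is 1, f(n) = d n for a one-part partition (n), and for a partition λ = (λ₁,…,λ_r) with r ≥ 2 parts, f(λ) = f(λ \ λ_r) + ∑_{k=1}^{λ_r} C(λ_r, k) (2k-1)!! f(λ \ λ_r − k̂), where λ \ λ_r removes the last part and μ − k̂ subtracts k from every part of μ (deleting resulting zero parts). Then f(λ) ≥ 0 for every partition λ, with equality if and only if λ = (1). -/
/-- The odd double factorial `(2k-1)!! = 1 * 3 * ... * (2k-1)`, with `odf 0 = 1`. -/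
def odf (k : Nat) : Int := ∏ j ∈ Finset.Icc 1 k, (2 * (j : Int) - 1)

/-- Subtract `k` from every part, deleting parts that become zero. -/
def subHat (k : Nat) (l : List Nat) : List Nat :=
  (l.map (fun x => x - k)).filter (fun x => x ≠ 0)

/-- `l` is a partition: a non-increasing list of positive integers. -/
def IsPartition (l : List Nat) : Prop := l.Chain' (· ≥ ·) ∧ ∀ x ∈ l, 0 < x

/-- Increase the `i`-th part (1-based indexing). -/
def upAt (i : Nat) (l : List Nat) : List Nat := l.set (i - 1) (l.getD (i - 1) 0 + 1)

/-- Decrease the `j`-th part (1-based indexing), deleting it if it becomes zero. -/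
def downAt (j : Nat) (l : List Nat) : List Nat :=
  (l.set (j - 1) (l.getD (j - 1) 0 - 1)).filter (fun x => x ≠ 0)

/-!
Strong induction on the size of the partition: every term of the recursion is nonnegative, and
`f (λ \ λᵣ) > 0` unless `λ \ λᵣ = (1)`, in which case the term `k = λᵣ` is `(2λᵣ-1)!! f ∅ > 0`.
For one-part partitions, consecutive pairs `d n, d (n+1)` stay nonnegative with positive sum,
which the recurrence turns into `d n > 0` for `n ≥ 2`.
-/

lemma odf_pos (k : ℕ) : 0 < odf k :=
  Finset.prod_pos fun j hj => by
    have : (1 : ℤ) ≤ j := by exact_mod_cast (Finset.mem_Icc.mp hj).1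
    linarith

lemma sum_subHat_le (k : ℕ) (l : List ℕ) : (subHat k l).sum ≤ l.sum :=
  calc (subHat k l).sum ≤ (l.map (· - k)).sum :=
        List.filter_sublist.sum_le_sum fun _ _ => Nat.zero_le _
    _ ≤ (l.map id).sum := List.sum_le_sum fun x _ => Nat.sub_le x k
    _ = l.sum := by rw [List.map_id]

lemma subHat_singleton_of_le {k m : ℕ} (h : m ≤ k) : subHat k [m] = [] := by
  simp [subHat, Nat.sub_eq_zero_of_le h]

lemma List.eq_nil_or_eq_singleton_or_two_le_length {α : Type*} (l : List α) :
    l = [] ∨ (∃ a, l = [a]) ∨ 2 ≤ l.length := by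
  rcases l with _ | ⟨a, _ | _⟩ <;> simp

lemma List.getLastD_eq_getLast {α : Type*} {l : List α} (a : α) (h : l ≠ []) :
    l.getLastD a = l.getLast h := by
  rw [List.getLastD_eq_getLast?, List.getLast?_eq_some_getLast h, Option.getD_some]

lemma List.sum_dropLast_add_getLast {M : Type*} [AddMonoid M] {l : List M} (h : l ≠ []) :
    l.dropLast.sum + l.getLast h = l.sum := by
  conv_rhs => rw [← List.dropLast_append_getLast h]
  rw [List.sum_append, List.sum_singleton]

namespace IsPartition

variable {l : List ℕ}

lemma dropLast (h : IsPartition l) : IsPartition l.dropLast :=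
  ⟨h.1.prefix l.dropLast_prefix, fun x hx => h.2 x (List.dropLast_subset l hx)⟩

lemma subHat (k : ℕ) (h : IsPartition l) : IsPartition (subHat k l) := by
  refine ⟨?_, fun x hx => ?_⟩
  · have hc := h.1
    rw [List.Chain', List.isChain_iff_pairwise] at hc ⊢
    exact (hc.map (S := (· ≥ ·)) (· - k) fun a b hab => Nat.sub_le_sub_right hab k).filter _
  · simp only [_root_.subHat, List.mem_filter, decide_eq_true_eq] at hx
    omega

lemma getLast_pos (h : IsPartition l) (hne : l ≠ []) : 0 < l.getLast hne :=
  h.2 _ (List.getLast_mem hne)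

end IsPartition

lemma pos_of_derangement_rec {d : ℕ → ℤ} (hd0 : d 0 = 1) (hd1 : d 1 = 0)
    (hd : ∀ n : ℕ, 2 ≤ n → d n = 2 * ((n : ℤ) - 1) * (d (n - 1) + d (n - 2))) :
    ∀ m, m ≠ 1 → 0 < d m := by
  have step : ∀ n, 0 < d n + d (n + 1) → 0 < d (n + 2) := fun n h => by
    rw [hd (n + 2) (by omega), Nat.add_sub_cancel, show n + 2 - 1 = n + 1 by omega]
    exact mul_pos (by omega) (by linarith)
  have consecutive : ∀ n, 0 ≤ d n ∧ 0 ≤ d (n + 1) ∧ 0 < d n + d (n + 1) := by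
    intro n
    induction n with
    | zero => simp [hd0, hd1]
    | succ n ih =>
      have hnext := step n ih.2.2
      exact ⟨ih.2.1, hnext.le, by linarith [ih.2.1]⟩
  intro m hm
  match m, hm with
  | 0, _ => simp [hd0]
  | n + 2, _ => exact step n (consecutive n).2.2

lemma pos_of_partition_rec {f : List ℕ → ℤ} (hf0 : 0 < f []) (hf1 : 0 ≤ f [1])
    (hfm : ∀ m, m ≠ 1 → 0 < f [m])
    (hfr : ∀ l : List ℕ, IsPartition l → 2 ≤ l.length →
      f l = f l.dropLast + ∑ k ∈ Finset.Icc 1 (l.getLastD 0),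
        ((l.getLastD 0).choose k : ℤ) * odf k * f (subHat k l.dropLast))
    {l : List ℕ} (hl : IsPartition l) (hne : l ≠ [1]) : 0 < f l := by
  induction hs : l.sum using Nat.strong_induction_on generalizing l with
  | _ n ih =>
  have nonneg : ∀ l', IsPartition l' → l'.sum < n → 0 ≤ f l' := fun l' hl' hs' => by
    by_cases h : l' = [1]
    · exact h ▸ hf1
    · exact (ih _ hs' hl' h rfl).le
  obtain rfl | ⟨m, rfl⟩ | hlen := l.eq_nil_or_eq_singleton_or_two_le_length
  · exact hf0
  · exact hfm m (by simpa using hne)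
  have hl0 : l ≠ [] := List.ne_nil_of_length_pos (by omega)
  set c := l.getLast hl0
  have hc : 0 < c := hl.getLast_pos hl0
  have hsum : l.dropLast.sum < n := by
    have := List.sum_dropLast_add_getLast hl0
    omega
  have hterm : ∀ k ∈ Finset.Icc 1 c,
      0 ≤ (c.choose k : ℤ) * odf k * f (subHat k l.dropLast) := fun k _ =>
    mul_nonneg (mul_nonneg (Int.natCast_nonneg _) (odf_pos k).le)
      (nonneg _ (hl.dropLast.subHat k) ((sum_subHat_le k _).trans_lt hsum))
  rw [hfr l hl hlen, List.getLastD_eq_getLast 0 hl0]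
  by_cases hlast : l.dropLast = [1]
  · have htop : 0 < (c.choose c : ℤ) * odf c * f (subHat c l.dropLast) := by
      rw [hlast, Nat.choose_self, subHat_singleton_of_le hc]
      simpa using mul_pos (odf_pos c) hf0
    linarith [Finset.single_le_sum hterm (Finset.right_mem_Icc.2 hc), nonneg _ hl.dropLast hsum]
  · linarith [ih _ hsum hl.dropLast hlast rfl, Finset.sum_nonneg hterm]

theorem stmt2
    (d : Nat → Int) (hd0 : d 0 = 1) (hd1 : d 1 = 0)
    (hd : ∀ n : Nat, 2 ≤ n → d n = 2 * ((n : Int) - 1) * (d (n - 1) + d (n - 2)))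
    (f : List Nat → Int) (hf0 : f [] = 1) (hf1 : ∀ m : Nat, f [m] = d m)
    (hfr : ∀ l : List Nat, IsPartition l → 2 ≤ l.length →
      f l = f l.dropLast + ∑ k ∈ Finset.Icc 1 (l.getLastD 0),
        ((l.getLastD 0).choose k : Int) * odf k * f (subHat k l.dropLast)) :
    ∀ l : List Nat, IsPartition l → 0 ≤ f l ∧ (f l = 0 ↔ l = [1]) := by
  have hd_pos := pos_of_derangement_rec hd0 hd1 hd
  have hf_pos : ∀ l, IsPartition l → l ≠ [1] → 0 < f l :=
    fun l hl => pos_of_partition_rec (by rw [hf0]; norm_num) (by rw [hf1, hd1])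
      (fun m hm => hf1 m ▸ hd_pos m hm) hfr hl
  intro l hl
  by_cases h : l = [1]
  · simp [h, hf1, hd1]
  · have hpos := hf_pos l hl h
    exact ⟨hpos.le, by simp [h, hpos.ne']⟩
end

section
/- With f as defined by the recurrence f(λ) = f(λ \ λ_r) + ∑_{k=1}^{λ_r} C(λ_r,k)(2k-1)!! f(λ \ λ_r − k̂) (with f of the empty partition equal to 1 and f(n) = d n), for any partition μ = (μ₁,…,μ_s) with s ≥ 2 parts, the identity ∑_{k=1}^{μ_s} C(μ_s, k) (2k+1)!! f(μ \ μ_s − k̂) = (2μ_s + 1) f(μ) − 2μ_s f(μ↓_s) − f(μ \ μ_s) holds, where μ↓_s is μ with its last part decreased by 1 (removed if it becomes 0). -/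
/-!
Write `μ = ν ++ [m]` and `a k = (2k-1)!! f(ν − k̂)`. The recurrence gives
`f μ - f ν = ∑ C(m,k) a k` and, applied to `μ↓_s = ν ++ [m-1]`, `f μ↓_s - f ν = ∑ C(m-1,k) a k`
(for `m = 1` both sides vanish). Since `(2k+1) C(m,k) = (2m+1) C(m,k) - 2m C(m-1,k)`, the left-hand
side equals `(2m+1) (f μ - f ν) - 2m (f μ↓_s - f ν)`.
-/

def SatisfiesPartitionRecurrence (f : List ℕ → ℤ) : Prop :=
  ∀ l : List ℕ, IsPartition l → 2 ≤ l.length →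
    f l = f l.dropLast + ∑ k ∈ Finset.Icc 1 (l.getLastD 0),
      ((l.getLastD 0).choose k : ℤ) * odf k * f (subHat k l.dropLast)

lemma odf_succ (k : ℕ) : odf (k + 1) = (2 * k + 1) * odf k := by
  rw [odf, Finset.prod_Icc_succ_top (by omega), ← odf]
  push_cast
  ring

lemma sub_mul_choose (m k : ℕ) : ((m : ℤ) - k) * m.choose k = m * (m - 1).choose k := by
  rcases le_or_gt k m with hkm | hmk
  · rcases Nat.eq_zero_or_pos m with rfl | hm
    · simp_all
    have h := Nat.choose_mul_succ_eq (m - 1) k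
    rw [Nat.sub_add_cancel hm] at h
    zify [hkm] at h
    linarith
  · simp [Nat.choose_eq_zero_of_lt hmk, Nat.choose_eq_zero_of_lt (by omega : m - 1 < k)]

lemma choose_mul_odf_succ (m k : ℕ) :
    (m.choose k : ℤ) * odf (k + 1)
      = (2 * m + 1) * (m.choose k * odf k) - 2 * m * ((m - 1).choose k * odf k) := by
  rw [odf_succ]
  linear_combination (-2 * odf k) * sub_mul_choose m k

lemma IsPartition.concat_of_le {ν : List ℕ} {m n : ℕ} (hp : IsPartition (ν ++ [m]))
    (hn : 0 < n) (hnm : n ≤ m) : IsPartition (ν ++ [n]) := by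
  obtain ⟨hc, hpos⟩ := hp
  have hc : List.IsChain (· ≥ ·) (ν ++ [m]) := hc
  rw [List.isChain_append] at hc
  refine ⟨List.isChain_append.2 ⟨hc.1, by simp, fun x hx y hy => ?_⟩, fun x hx => ?_⟩
  · have := hc.2.2 x hx m (by simp)
    simp only [List.head?_cons, Option.mem_def, Option.some.injEq] at hy
    omega
  · rcases List.mem_append.1 hx with hx | hx
    · exact hpos x (by simp [hx])
    · simp_all

lemma downAt_length_concat {ν : List ℕ} (hν : ∀ x ∈ ν, 0 < x) (m : ℕ) :
    downAt (ν ++ [m]).length (ν ++ [m]) = ν ++ [m - 1].filter (· ≠ 0) := by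
  simp only [downAt, List.length_append, List.length_singleton, Nat.add_sub_cancel,
    List.getD_eq_getElem?_getD, List.getElem?_concat_length, Option.getD_some,
    List.set_append, lt_irrefl, if_false, Nat.sub_self, List.set_cons_zero,
    List.filter_append]
  rw [List.filter_eq_self.2 fun a ha => by simpa using (hν a ha).ne']

namespace SatisfiesPartitionRecurrence

variable {f : List ℕ → ℤ} {ν : List ℕ} {m : ℕ}

lemma apply_concat (hf : SatisfiesPartitionRecurrence f) (hν : ν ≠ [])
    (hp : IsPartition (ν ++ [m])) :
    f (ν ++ [m]) = f ν + ∑ k ∈ Finset.Icc 1 m, (m.choose k : ℤ) * odf k * f (subHat k ν) := by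
  have hlen : 2 ≤ (ν ++ [m]).length := by
    simpa [Nat.one_le_iff_ne_zero] using hν
  simpa using hf _ hp hlen

lemma apply_downAt (hf : SatisfiesPartitionRecurrence f) (hν : ν ≠ [])
    (hp : IsPartition (ν ++ [m])) :
    f (downAt (ν ++ [m]).length (ν ++ [m]))
      = f ν + ∑ k ∈ Finset.Icc 1 m, ((m - 1).choose k : ℤ) * odf k * f (subHat k ν) := by
  have hνpos : ∀ x ∈ ν, 0 < x := fun x hx => hp.2 x (by simp [hx])
  rw [downAt_length_concat hνpos]
  obtain ⟨n, rfl⟩ : ∃ n, m = n + 1 := Nat.exists_eq_add_one.2 (hp.2 m (by simp))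
  rcases Nat.eq_zero_or_pos n with rfl | hn
  · simp +contextual [Finset.sum_eq_zero]
  · have hp' : IsPartition (ν ++ [n]) := hp.concat_of_le hn (by omega)
    simp only [Nat.add_sub_cancel, List.filter_singleton, hn.ne', decide_true, ne_eq,
      not_false_eq_true, cond_true, Finset.sum_Icc_succ_top (by omega : 1 ≤ n + 1),
      Nat.choose_succ_self, Nat.cast_zero, zero_mul, add_zero]
    exact hf.apply_concat hν hp'

end SatisfiesPartitionRecurrence

theorem stmt3_general
    (f : List Nat → Int)
    (hfr : ∀ l : List Nat, IsPartition l → 2 ≤ l.length →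
      f l = f l.dropLast + ∑ k ∈ Finset.Icc 1 (l.getLastD 0),
        ((l.getLastD 0).choose k : Int) * odf k * f (subHat k l.dropLast))
    (μ : List Nat) (hμ : IsPartition μ) (hs : 2 ≤ μ.length) :
    ∑ k ∈ Finset.Icc 1 (μ.getLastD 0),
        ((μ.getLastD 0).choose k : Int) * odf (k + 1) * f (subHat k μ.dropLast)
      = (2 * (μ.getLastD 0 : Int) + 1) * f μ - 2 * (μ.getLastD 0 : Int) * f (downAt μ.length μ)
        - f μ.dropLast := by
  have hf : SatisfiesPartitionRecurrence f := hfr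
  rcases μ.eq_nil_or_concat' with rfl | ⟨ν, m, rfl⟩
  · simp at hs
  have hν : ν ≠ [] := by rintro rfl; simp at hs
  have hterm (k : ℕ) : (m.choose k : ℤ) * odf (k + 1) * f (subHat k ν)
      = (2 * m + 1) * (m.choose k * odf k * f (subHat k ν))
        - 2 * m * ((m - 1).choose k * odf k * f (subHat k ν)) := by
    linear_combination f (subHat k ν) * choose_mul_odf_succ m k
  simp only [List.dropLast_concat, List.getLastD_concat]
  rw [Finset.sum_congr rfl fun k _ => hterm k, Finset.sum_sub_distrib, ← Finset.mul_sum,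
    ← Finset.mul_sum, hf.apply_concat hν hμ, hf.apply_downAt hν hμ]
  ring

theorem stmt3
    (d : Nat → Int) (hd0 : d 0 = 1) (hd1 : d 1 = 0)
    (hd : ∀ n : Nat, 2 ≤ n → d n = 2 * ((n : Int) - 1) * (d (n - 1) + d (n - 2)))
    (f : List Nat → Int) (hf0 : f [] = 1) (hf1 : ∀ m : Nat, f [m] = d m)
    (hfr : ∀ l : List Nat, IsPartition l → 2 ≤ l.length →
      f l = f l.dropLast + ∑ k ∈ Finset.Icc 1 (l.getLastD 0),
        ((l.getLastD 0).choose k : Int) * odf k * f (subHat k l.dropLast))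
    (μ : List Nat) (hμ : IsPartition μ) (hs : 2 ≤ μ.length) :
    ∑ k ∈ Finset.Icc 1 (μ.getLastD 0),
        ((μ.getLastD 0).choose k : Int) * odf (k + 1) * f (subHat k μ.dropLast)
      = (2 * (μ.getLastD 0 : Int) + 1) * f μ - 2 * (μ.getLastD 0 : Int) * f (downAt μ.length μ)
        - f μ.dropLast :=
  stmt3_general f hfr μ hμ hs
end

section
/- For all a ≥ 1 and b ≥ 0, f(2^a, 1^b) = a² + b(a−1) + 1, where (2^a, 1^b) is the partition with a parts equal to 2 followed by b parts equal to 1. -/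
def LastPartRecurrence (f : List ℕ → ℤ) : Prop :=
  ∀ l : List ℕ, IsPartition l → 2 ≤ l.length →
    f l = f l.dropLast + ∑ k ∈ Finset.Icc 1 (l.getLastD 0),
      ((l.getLastD 0).choose k : ℤ) * odf k * f (subHat k l.dropLast)

lemma odf_one : odf 1 = 1 := by decide

lemma odf_two : odf 2 = 3 := by decide

lemma subHat_append (k : ℕ) (l₁ l₂ : List ℕ) :
    subHat k (l₁ ++ l₂) = subHat k l₁ ++ subHat k l₂ := by
  simp [subHat, List.filter_append]

lemma subHat_replicate_of_lt {k m : ℕ} (h : k < m) (n : ℕ) :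
    subHat k (List.replicate n m) = List.replicate n (m - k) := by
  simp [subHat, Nat.sub_ne_zero_of_lt h]

lemma subHat_replicate_of_le {k m : ℕ} (h : m ≤ k) (n : ℕ) :
    subHat k (List.replicate n m) = [] := by
  simp [subHat, Nat.sub_eq_zero_of_le h]

lemma isPartition_replicate_append_replicate {m n : ℕ} (hn : 0 < n) (hnm : n ≤ m) (a b : ℕ) :
    IsPartition (List.replicate a m ++ List.replicate b n) := by
  refine ⟨?_, fun x hx => ?_⟩
  · rw [List.Chain', List.isChain_iff_pairwise, List.pairwise_append]
    refine ⟨List.pairwise_replicate.2 (Or.inr le_rfl), List.pairwise_replicate.2 (Or.inr le_rfl),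
      fun x hx y hy => ?_⟩
    rw [List.eq_of_mem_replicate hx, List.eq_of_mem_replicate hy]
    exact hnm
  · rcases List.mem_append.1 hx with h | h <;> rw [List.eq_of_mem_replicate h] <;> omega

lemma LastPartRecurrence.append_singleton {f : List ℕ → ℤ} (hfr : LastPartRecurrence f)
    {l : List ℕ} (hl : l ≠ []) (m : ℕ) (hp : IsPartition (l ++ [m])) :
    f (l ++ [m]) = f l + ∑ k ∈ Finset.Icc 1 m, (m.choose k : ℤ) * odf k * f (subHat k l) := by
  have hlen : 2 ≤ (l ++ [m]).length := by
    simpa [Nat.one_le_iff_ne_zero] using hl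
  simpa using hfr _ hp hlen

lemma LastPartRecurrence.apply_replicate_one {f : List ℕ → ℤ} (hfr : LastPartRecurrence f)
    (hf0 : f [] = 1) (hf1 : f [1] = 0) {b : ℕ} (hb : 1 ≤ b) :
    f (List.replicate b 1) = (b : ℤ) - 1 := by
  induction b, hb using Nat.le_induction with
  | base => simpa using hf1
  | succ c hc ih =>
    have hp := isPartition_replicate_append_replicate one_pos le_rfl 0 (c + 1)
    rw [List.replicate_zero, List.nil_append, List.replicate_succ'] at hp
    rw [List.replicate_succ', hfr.append_singleton (by simp; omega) 1 hp, ih, Finset.Icc_self,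
      Finset.sum_singleton, subHat_replicate_of_le le_rfl, hf0, Nat.choose_self, odf_one]
    push_cast
    ring

lemma LastPartRecurrence.apply_replicate_two {f : List ℕ → ℤ} (hfr : LastPartRecurrence f)
    (hf0 : f [] = 1) (hf1 : f [1] = 0) (hf2 : f [2] = 2) {a : ℕ} (ha : 1 ≤ a) :
    f (List.replicate a 2) = (a : ℤ) ^ 2 + 1 := by
  induction a, ha using Nat.le_induction with
  | base => simpa using hf2
  | succ c hc ih =>
    have hp := isPartition_replicate_append_replicate two_pos le_rfl (c + 1) 0
    rw [List.replicate_zero, List.append_nil, List.replicate_succ'] at hp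
    have hsub : subHat 1 (List.replicate c 2) = List.replicate c 1 :=
      subHat_replicate_of_lt one_lt_two c
    rw [List.replicate_succ', hfr.append_singleton (by simp; omega) 2 hp, ih,
      show Finset.Icc 1 2 = {1, 2} from rfl, Finset.sum_pair (by decide), hsub,
      subHat_replicate_of_le le_rfl, hf0, hfr.apply_replicate_one hf0 hf1 hc,
      Nat.choose_one_right, Nat.choose_self, odf_one, odf_two]
    push_cast
    ring

lemma LastPartRecurrence.apply_replicate_two_append_replicate_one {f : List ℕ → ℤ}
    (hfr : LastPartRecurrence f) (hf0 : f [] = 1) (hf1 : f [1] = 0) (hf2 : f [2] = 2)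
    {a : ℕ} (ha : 1 ≤ a) (b : ℕ) :
    f (List.replicate a 2 ++ List.replicate b 1) = (a : ℤ) ^ 2 + (b : ℤ) * ((a : ℤ) - 1) + 1 := by
  induction b with
  | zero => simpa using hfr.apply_replicate_two hf0 hf1 hf2 ha
  | succ c ih =>
    have hp := isPartition_replicate_append_replicate one_pos one_le_two a (c + 1)
    rw [List.replicate_succ', ← List.append_assoc] at hp ⊢
    have hsub : subHat 1 (List.replicate a 2) = List.replicate a 1 :=
      subHat_replicate_of_lt one_lt_two a
    rw [hfr.append_singleton (by simp; omega) 1 hp, ih, Finset.Icc_self, Finset.sum_singleton,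
      subHat_append, hsub, subHat_replicate_of_le le_rfl, List.append_nil,
      hfr.apply_replicate_one hf0 hf1 ha, Nat.choose_self, odf_one]
    push_cast
    ring

theorem stmt13
    (d : Nat → Int) (hd0 : d 0 = 1) (hd1 : d 1 = 0)
    (hd : ∀ n : Nat, 2 ≤ n → d n = 2 * ((n : Int) - 1) * (d (n - 1) + d (n - 2)))
    (f : List Nat → Int) (hf0 : f [] = 1) (hf1 : ∀ m : Nat, f [m] = d m)
    (hfr : ∀ l : List Nat, IsPartition l → 2 ≤ l.length →
      f l = f l.dropLast + ∑ k ∈ Finset.Icc 1 (l.getLastD 0),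
        ((l.getLastD 0).choose k : Int) * odf k * f (subHat k l.dropLast)) :
    ∀ a b : Nat, 1 ≤ a →
      f (List.replicate a 2 ++ List.replicate b 1)
        = (a : Int) ^ 2 + (b : Int) * ((a : Int) - 1) + 1 := by
  have hf1' : f [1] = 0 := (hf1 1).trans hd1
  have hf2 : f [2] = 2 := by simp [hf1, hd 2 le_rfl, hd1, hd0]
  intro a b ha
  exact LastPartRecurrence.apply_replicate_two_append_replicate_one hfr hf0 hf1' hf2 ha b
end

section
/- For all u, q ≥ 1, f(u+1, u^{q-1}) = 2u · (f(u, (u−1)^{q-1}) + f((u−1)^q)), where (u+1, u^{q-1}) is the partition with first part u+1 followed by q−1 parts equal to u, and partitions with parts equal to 0 have those parts deleted. -/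
def LastPartRecursion (f : List ℕ → ℤ) : Prop :=
  ∀ l : List ℕ, IsPartition l → 2 ≤ l.length →
    f l = f l.dropLast + ∑ k ∈ Finset.Icc 1 (l.getLastD 0),
      ((l.getLastD 0).choose k : ℤ) * odf k * f (subHat k l.dropLast)

def hook (a b m : ℕ) : List ℕ := (a :: List.replicate m b).filter (· ≠ 0)

lemma hook_eq_cons {a b : ℕ} (ha : a ≠ 0) (hb : b ≠ 0) (m : ℕ) :
    hook a b m = a :: List.replicate m b := by
  simp [hook, ha, hb]

lemma hook_eq_of_eq_zero_or_eq_zero {a b m : ℕ} (h : b = 0 ∨ m = 0) :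
    hook a b m = [a].filter (· ≠ 0) := by
  rcases h with rfl | rfl <;> simp [hook, List.filter_cons]

lemma isPartition_cons_replicate {a b : ℕ} (hb : 0 < b) (hba : b ≤ a) (m : ℕ) :
    IsPartition (a :: List.replicate m b) := by
  refine ⟨List.isChain_cons.2 ⟨fun y hy => ?_, List.isChain_replicate_of_rel m le_rfl⟩,
    fun x hx => ?_⟩
  · obtain rfl := List.eq_of_mem_replicate (List.mem_of_mem_head? hy); exact hba
  · rcases List.mem_cons.1 hx with rfl | hx
    · omega
    · rw [List.eq_of_mem_replicate hx]; exact hb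

lemma getLastD_cons_replicate_succ (a b c m : ℕ) :
    (a :: List.replicate (m + 1) b).getLastD c = b := by
  rw [List.getLastD_cons, List.getLastD_eq_getLast?, List.getLast?_replicate]; simp

lemma dropLast_cons_replicate_succ (a b m : ℕ) :
    (a :: List.replicate (m + 1) b).dropLast = a :: List.replicate m b := by
  rw [List.replicate_succ, List.dropLast_cons_cons, ← List.replicate_succ,
    List.dropLast_replicate, Nat.add_sub_cancel]

section

variable {d : ℕ → ℤ} {f : List ℕ → ℤ}

lemma apply_hook_eq_of_eq_zero_or_eq_zero (hd0 : d 0 = 1) (hf0 : f [] = 1)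
    (hf1 : ∀ m, f [m] = d m) {a b m : ℕ} (h : b = 0 ∨ m = 0) : f (hook a b m) = d a := by
  rw [hook_eq_of_eq_zero_or_eq_zero h]
  rcases eq_or_ne a 0 with rfl | ha
  · simpa [hd0] using hf0
  · simpa [ha] using hf1 a

lemma LastPartRecursion.apply_hook_succ (hf : LastPartRecursion f) {a b : ℕ} (hba : b ≤ a)
    (m : ℕ) : f (hook a b (m + 1)) = f (hook a b m) +
      ∑ k ∈ Finset.Icc 1 b, (b.choose k : ℤ) * odf k * f (hook (a - k) (b - k) m) := by
  rcases Nat.eq_zero_or_pos b with rfl | hb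
  · simp [hook_eq_of_eq_zero_or_eq_zero (Or.inl rfl)]
  have ha : a ≠ 0 := by omega
  rw [hook_eq_cons ha hb.ne', hf _ (isPartition_cons_replicate hb hba _) (by simp),
    getLastD_cons_replicate_succ, dropLast_cons_replicate_succ, hook_eq_cons ha hb.ne']
  simp [subHat, hook]

lemma apply_hook_succ_self (hd0 : d 0 = 1) (hd1 : d 1 = 0)
    (hd : ∀ n : ℕ, 2 ≤ n → d n = 2 * ((n : ℤ) - 1) * (d (n - 1) + d (n - 2)))
    (hf0 : f [] = 1) (hf1 : ∀ m, f [m] = d m) (hf : LastPartRecursion f) (m u : ℕ) :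
    f (hook (u + 1) u m) = 2 * u * (f (hook u (u - 1) m) + f (hook (u - 1) (u - 1) m)) := by
  induction m generalizing u with
  | zero =>
    simp only [apply_hook_eq_of_eq_zero_or_eq_zero hd0 hf0 hf1 (Or.inr rfl)]
    rcases u with _ | w
    · simp [hd1]
    · rw [hd (w + 2) (by omega), show w + 2 - 1 = w + 1 by omega, Nat.add_sub_cancel,
        Nat.add_sub_cancel]
      push_cast
      ring
  | succ m ih =>
    rcases u with _ | w
    · simp [apply_hook_eq_of_eq_zero_or_eq_zero hd0 hf0 hf1 (Or.inl rfl), hd1]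
    set g : ℕ → ℤ := fun k => f (hook (w + 1 - k) (w - k) m) + f (hook (w - k) (w - k) m)
    have hsum : ∑ k ∈ Finset.Icc 1 (w + 1),
          ((w + 1).choose k : ℤ) * odf k * f (hook (w + 1 + 1 - k) (w + 1 - k) m)
        = 2 * ((w + 1 : ℕ) : ℤ) *
            ∑ k ∈ Finset.Icc 1 w, (w.choose k : ℤ) * odf k * g k := by
      calc _ = ∑ k ∈ Finset.Icc 1 (w + 1),
              2 * ((w + 1 : ℕ) : ℤ) * ((w.choose k : ℤ) * odf k * g k) := by
            refine Finset.sum_congr rfl fun k hk => ?_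
            have hk := (Finset.mem_Icc.1 hk).2
            rw [show w + 1 + 1 - k = w + 1 - k + 1 by omega, ih,
              show w + 1 - k - 1 = w - k by omega]
            have hc : ((w + 1).choose k : ℤ) * ((w + 1 - k : ℕ) : ℤ)
                = w.choose k * ((w + 1 : ℕ) : ℤ) := by
              exact_mod_cast (Nat.choose_mul_succ_eq w k).symm
            linear_combination (2 * odf k * g k) * hc
        _ = _ := by
            rw [Finset.sum_Icc_succ_top (by omega), Nat.choose_succ_self, Finset.mul_sum]
            simp
    rw [hf.apply_hook_succ (by omega), hf.apply_hook_succ (by omega), hf.apply_hook_succ le_rfl,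
      ih, hsum]
    simp only [g, Nat.add_sub_cancel, Finset.sum_add_distrib, mul_add]
    ring

end

theorem stmt14
    (d : Nat → Int) (hd0 : d 0 = 1) (hd1 : d 1 = 0)
    (hd : ∀ n : Nat, 2 ≤ n → d n = 2 * ((n : Int) - 1) * (d (n - 1) + d (n - 2)))
    (f : List Nat → Int) (hf0 : f [] = 1) (hf1 : ∀ m : Nat, f [m] = d m)
    (hfr : ∀ l : List Nat, IsPartition l → 2 ≤ l.length →
      f l = f l.dropLast + ∑ k ∈ Finset.Icc 1 (l.getLastD 0),
        ((l.getLastD 0).choose k : Int) * odf k * f (subHat k l.dropLast)) :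
    ∀ u q : Nat, 1 ≤ u → 1 ≤ q →
      f ((u + 1) :: List.replicate (q - 1) u)
        = 2 * (u : Int) * (f ((u :: List.replicate (q - 1) (u - 1)).filter (fun x => x ≠ 0))
            + f ((List.replicate q (u - 1)).filter (fun x => x ≠ 0))) := by
  intro u q hu hq
  obtain ⟨m, rfl⟩ : ∃ m, q = m + 1 := ⟨q - 1, by omega⟩
  rw [Nat.add_sub_cancel, ← hook_eq_cons (a := u + 1) (by omega) (by omega)]
  exact apply_hook_succ_self hd0 hd1 hd hf0 hf1 hfr m u
end

section
/- Let λ and λ' be partitions of n with the same first part, λ strictly dominated by λ'. Then there exists a finite sequence of partitions γ¹ = λ, γ², …, γᵗ = λ' of n, all with the same first part, such that each γ^{q+1} is obtained from γ^q by increasing the i-th part by 1 and decreasing the j-th part by 1 for some 2 ≤ i < j ≤ ℓ(γ^q) with γ^q_{i-1} > γ^q_i and (j = ℓ(γ^q) or γ^q_j > γ^q_{j+1}), deleting any resulting zero part. -/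
open Finset Relation

namespace List

theorem getD_set {α : Type*} (l : List α) (i : ℕ) (v d : α) (t : ℕ) :
    (l.set i v).getD t d = if t = i ∧ i < l.length then v else l.getD t d := by
  simp only [getD_eq_getElem?_getD, getElem?_set]
  grind

theorem lt_length_of_getD_pos {l : List ℕ} {t : ℕ} (h : 0 < l.getD t 0) : t < l.length := by
  by_contra hc
  rw [getD_eq_default _ _ (by omega)] at h
  exact h.false

theorem isChain_ge_iff_antitone_getD {l : List ℕ} :
    l.IsChain (· ≥ ·) ↔ Antitone (l.getD · 0) := by
  constructor
  · intro h
    refine antitone_nat_of_succ_le fun t => ?_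
    rcases lt_or_ge (t + 1) l.length with ht | ht
    · rw [getD_eq_getElem _ _ ht, getD_eq_getElem _ _ (by omega)]
      exact isChain_iff_getElem.mp h t ht
    · rw [getD_eq_default _ _ ht]
      exact Nat.zero_le _
  · intro h
    refine isChain_iff_getElem.mpr fun t ht => ?_
    have : l.getD (t + 1) 0 ≤ l.getD t 0 := h (Nat.le_succ t)
    rwa [getD_eq_getElem _ _ ht, getD_eq_getElem _ _ (by omega)] at this

/-- Zeros of a non-increasing list form a suffix, so deleting them is invisible to `getD · 0`. -/
theorem getD_filter_ne_zero {l : List ℕ} (h : l.IsChain (· ≥ ·)) (t : ℕ) :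
    (l.filter (· ≠ 0)).getD t 0 = l.getD t 0 := by
  induction l generalizing t with
  | nil => rfl
  | cons x l ih =>
    rcases Nat.eq_zero_or_pos x with rfl | hx
    · have hzero : (0 :: l).filter (· ≠ 0) = [] :=
        filter_eq_nil_iff.mpr fun y hy => by
          rcases mem_cons.mp hy with rfl | hy
          · simp
          · simpa using (pairwise_cons.mp h.pairwise).1 y hy
      have : (0 :: l).getD t 0 ≤ 0 := isChain_ge_iff_antitone_getD.mp h (Nat.zero_le t)
      rw [hzero, getD_nil]
      omega
    · rw [filter_cons_of_pos (by simpa using hx.ne')]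
      cases t with
      | zero => rfl
      | succ t => exact ih h.tail t

end List

namespace IsPartition

variable {l : List ℕ}

theorem antitone_getD (hl : IsPartition l) : Antitone (l.getD · 0) :=
  List.isChain_ge_iff_antitone_getD.mp hl.1

theorem getD_pos_iff (hl : IsPartition l) {t : ℕ} : 0 < l.getD t 0 ↔ t < l.length :=
  ⟨List.lt_length_of_getD_pos, fun ht => by
    rw [List.getD_eq_getElem _ _ ht]; exact hl.2 _ (List.getElem_mem ht)⟩

theorem ext_getD {l' : List ℕ} (hl : IsPartition l) (hl' : IsPartition l')
    (h : ∀ t, l.getD t 0 = l'.getD t 0) : l = l' := by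
  have hlen : ∀ t, t < l.length ↔ t < l'.length := fun t => by
    rw [← hl.getD_pos_iff, ← hl'.getD_pos_iff, h]
  have := hlen l.length
  have := hlen l'.length
  refine List.ext_getElem (by omega) fun t h₁ h₂ => ?_
  simpa only [List.getD_eq_getElem _ _ h₁, List.getD_eq_getElem _ _ h₂] using h t

theorem length_le_sum (hl : IsPartition l) : l.length ≤ l.sum :=
  List.length_le_sum_of_one_le l hl.2

end IsPartition

def partialSum (l : List ℕ) (k : ℕ) : ℕ := ∑ t ∈ range k, l.getD t 0

theorem partialSum_succ (l : List ℕ) (k : ℕ) :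
    partialSum l (k + 1) = partialSum l k + l.getD k 0 :=
  sum_range_succ _ _

theorem partialSum_of_length_le {l : List ℕ} {k : ℕ} (h : l.length ≤ k) :
    partialSum l k = l.sum := by
  induction l generalizing k with
  | nil => simp [partialSum]
  | cons x l ih =>
    obtain ⟨k, rfl⟩ : ∃ k', k = k' + 1 := ⟨k - 1, by simp only [List.length_cons] at h; omega⟩
    rw [partialSum, sum_range_succ', List.sum_cons, ← ih (by simpa using h)]
    simp [partialSum, add_comm]

theorem partialSum_le_sum (l : List ℕ) (k : ℕ) : partialSum l k ≤ l.sum := by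
  rw [← partialSum_of_length_le (le_max_right k l.length)]
  exact sum_le_sum_of_subset (range_subset_range.mpr (le_max_left _ _))

/-- Row `a ≥ 1` may gain a box and row `b > a` may lose one without breaking monotonicity
(rows counted from `0`). -/
def CanMoveBox (l : List ℕ) (a b : ℕ) : Prop :=
  1 ≤ a ∧ a < b ∧ l.getD a 0 < l.getD (a - 1) 0 ∧ l.getD (b + 1) 0 < l.getD b 0

/-- Rows are counted from `0` here, while `upAt` and `downAt` count them from `1`. -/
def moveBox (a b : ℕ) (l : List ℕ) : List ℕ := downAt (b + 1) (upAt (a + 1) l)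

def movedRow (l : List ℕ) (a b t : ℕ) : ℕ :=
  if t = a then l.getD a 0 + 1 else if t = b then l.getD b 0 - 1 else l.getD t 0

section moveBox

variable {l : List ℕ} {a b : ℕ}

theorem antitone_movedRow (hl : Antitone (l.getD · 0)) (h : CanMoveBox l a b) :
    Antitone (movedRow l a b) := by
  obtain ⟨ha, hab, haa, hbb⟩ := h
  refine antitone_nat_of_succ_le fun t => ?_
  have hstep : l.getD (t + 1) 0 ≤ l.getD t 0 := hl (Nat.le_succ t)
  have hba : l.getD b 0 ≤ l.getD a 0 := hl hab.le
  have before_a : t + 1 = a → l.getD a 0 < l.getD t 0 := by rintro rfl; simpa using haa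
  have before_b : t + 1 = b → l.getD b 0 ≤ l.getD t 0 := by rintro rfl; exact hstep
  have after_a : t = a → l.getD (t + 1) 0 ≤ l.getD a 0 := by rintro rfl; exact hstep
  have after_b : t = b → l.getD (t + 1) 0 < l.getD b 0 := by rintro rfl; exact hbb
  simp only [movedRow]
  split_ifs <;> omega

theorem getD_moveBox (hl : Antitone (l.getD · 0)) (h : CanMoveBox l a b) (t : ℕ) :
    (moveBox a b l).getD t 0 = movedRow l a b t := by
  have ⟨_, hab, _, hbb⟩ := h
  have hb : b < l.length := List.lt_length_of_getD_pos (by omega)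
  set L := (l.set a (l.getD a 0 + 1)).set b (l.getD b 0 - 1)
  have hL : ∀ t, L.getD t 0 = movedRow l a b t := fun t => by
    simp only [L, movedRow, List.getD_set, List.length_set]
    split_ifs <;> omega
  have hLchain : L.IsChain (· ≥ ·) := by
    rw [List.isChain_ge_iff_antitone_getD, funext hL]
    exact antitone_movedRow hl h
  have hmove : moveBox a b l = L.filter (· ≠ 0) := by
    simp only [moveBox, downAt, upAt, Nat.add_sub_cancel, L, List.getD_set]
    rw [if_neg (by omega)]
  rw [hmove, List.getD_filter_ne_zero hLchain, hL]

theorem IsPartition.moveBox (hl : IsPartition l) (h : CanMoveBox l a b) :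
    IsPartition (moveBox a b l) := by
  refine ⟨List.isChain_ge_iff_antitone_getD.mpr ?_, fun x hx => ?_⟩
  · simpa only [getD_moveBox hl.antitone_getD h] using antitone_movedRow hl.antitone_getD h
  · have := (List.mem_filter.mp hx).2
    simp only [ne_eq, decide_eq_true_eq] at this
    omega

theorem partialSum_moveBox (hl : Antitone (l.getD · 0)) (h : CanMoveBox l a b) (k : ℕ) :
    partialSum (moveBox a b l) k = partialSum l k + if a < k ∧ k ≤ b then 1 else 0 := by
  have ⟨_, hab, _, hbb⟩ := h
  have hrow : ∀ t, movedRow l a b t + (if t = b then 1 else 0)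
      = l.getD t 0 + (if t = a then 1 else 0) := fun t => by
    simp only [movedRow]
    split_ifs <;> subst_vars <;> omega
  have hsum := sum_congr rfl fun t (_ : t ∈ range k) => hrow t
  simp only [sum_add_distrib, sum_ite_eq', mem_range] at hsum
  simp only [partialSum, getD_moveBox hl h]
  split_ifs at hsum ⊢ <;> omega

theorem sum_moveBox (hl : Antitone (l.getD · 0)) (h : CanMoveBox l a b) :
    (moveBox a b l).sum = l.sum := by
  have hb : b < l.length := List.lt_length_of_getD_pos (by have := h.2.2.2; omega)
  have hlen : (moveBox a b l).length ≤ l.length := by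
    refine (List.length_filter_le _ _).trans ?_
    simp only [upAt, List.length_set, le_refl]
  rw [← partialSum_of_length_le hlen, ← partialSum_of_length_le le_rfl,
    partialSum_moveBox hl h, if_neg (by omega), add_zero]

theorem getD_zero_moveBox (hl : Antitone (l.getD · 0)) (h : CanMoveBox l a b) :
    (moveBox a b l).getD 0 0 = l.getD 0 0 := by
  rw [getD_moveBox hl h, movedRow, if_neg (by have := h.1; omega),
    if_neg (by have := h.2.1; omega)]

theorem partialSum_lt_partialSum_moveBox (hl : Antitone (l.getD · 0)) (h : CanMoveBox l a b) :
    partialSum l < partialSum (moveBox a b l) :=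
  Pi.lt_def.mpr ⟨fun k => by rw [partialSum_moveBox hl h]; exact Nat.le_add_right _ _,
    b, by rw [partialSum_moveBox hl h, if_pos ⟨h.2.1, le_rfl⟩]; omega⟩

end moveBox

/-- The elementary move of the theorem, rows counted from `1`. -/
def IsElementaryMove (l l' : List ℕ) : Prop :=
  ∃ i j : ℕ, 2 ≤ i ∧ i < j ∧ j ≤ l.length ∧ l.getD (i - 1) 0 < l.getD (i - 2) 0
    ∧ (j = l.length ∨ l.getD j 0 < l.getD (j - 1) 0) ∧ l' = downAt j (upAt i l)

section IsElementaryMove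

variable {l l' : List ℕ}

theorem isElementaryMove_iff (hl : IsPartition l) :
    IsElementaryMove l l' ↔ ∃ a b, CanMoveBox l a b ∧ l' = moveBox a b l := by
  constructor
  · rintro ⟨i, j, hi, hij, hj, hii, hjj, rfl⟩
    obtain ⟨a, rfl⟩ : ∃ a, i = a + 1 := ⟨i - 1, by omega⟩
    obtain ⟨b, rfl⟩ : ∃ b, j = b + 1 := ⟨j - 1, by omega⟩
    have haa : l.getD a 0 < l.getD (a - 1) 0 := by
      simpa [show a + 1 - 2 = a - 1 by omega] using hii
    refine ⟨a, b, ⟨by omega, by omega, haa, ?_⟩, rfl⟩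
    rcases hjj with hj | hj
    · rw [hj, List.getD_eq_default _ _ le_rfl, hl.getD_pos_iff]
      omega
    · simpa using hj
  · rintro ⟨a, b, h, rfl⟩
    obtain ⟨ha, hab, haa, hbb⟩ := h
    have hb : b < l.length := List.lt_length_of_getD_pos (by omega)
    exact ⟨a + 1, b + 1, by omega, by omega, hb,
      by simpa [show a + 1 - 2 = a - 1 by omega] using haa, Or.inr (by simpa using hbb), rfl⟩

theorem IsElementaryMove.isPartition (hl : IsPartition l) (h : IsElementaryMove l l') :
    IsPartition l' := by
  obtain ⟨a, b, hcan, rfl⟩ := (isElementaryMove_iff hl).mp h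
  exact hl.moveBox hcan

theorem IsElementaryMove.sum_eq (hl : IsPartition l) (h : IsElementaryMove l l') :
    l'.sum = l.sum := by
  obtain ⟨a, b, hcan, rfl⟩ := (isElementaryMove_iff hl).mp h
  exact sum_moveBox hl.antitone_getD hcan

theorem IsElementaryMove.getD_zero_eq (hl : IsPartition l) (h : IsElementaryMove l l') :
    l'.getD 0 0 = l.getD 0 0 := by
  obtain ⟨a, b, hcan, rfl⟩ := (isElementaryMove_iff hl).mp h
  exact getD_zero_moveBox hl.antitone_getD hcan

end IsElementaryMove

section Dominance

variable {γ μ : List ℕ}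

/-- Were equality to hold at `k + 1`, then `γ_k > μ_k ≥ μ_{k+1}` and dominance would fail at
`k + 2`. -/
theorem partialSum_succ_lt_of_getD_succ_eq (hμ : Antitone (μ.getD · 0))
    (hdom : partialSum γ ≤ partialSum μ) {k : ℕ} (hk : partialSum γ k < partialSum μ k)
    (heq : γ.getD (k + 1) 0 = γ.getD k 0) : partialSum γ (k + 1) < partialSum μ (k + 1) := by
  by_contra hge
  have hnext : partialSum γ (k + 1 + 1) ≤ partialSum μ (k + 1 + 1) := hdom _
  have hμk : μ.getD (k + 1) 0 ≤ μ.getD k 0 := hμ (Nat.le_succ k)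
  simp only [partialSum_succ] at hge hnext
  omega

theorem exists_getD_succ_lt_of_getD_pos {l : List ℕ} (hl : IsPartition l) {c : ℕ}
    (hc : 0 < l.getD c 0) :
    ∃ b, c ≤ b ∧ l.getD (b + 1) 0 < l.getD b 0
      ∧ ∀ k, c ≤ k → k < b → l.getD (k + 1) 0 = l.getD k 0 := by
  have hlen := List.lt_length_of_getD_pos hc
  have hex : ∃ b, c ≤ b ∧ l.getD (b + 1) 0 < l.getD b 0 := ⟨l.length - 1, by omega, by
    rw [Nat.sub_add_cancel (by omega), List.getD_eq_default _ _ le_rfl]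
    exact hl.getD_pos_iff.mpr (by omega)⟩
  refine ⟨Nat.find hex, (Nat.find_spec hex).1, (Nat.find_spec hex).2, fun k hck hkb => ?_⟩
  have := Nat.find_min hex hkb
  have : l.getD (k + 1) 0 ≤ l.getD k 0 := hl.antitone_getD (Nat.le_succ k)
  omega

theorem exists_first_getD_lt_of_dominated (hγ : IsPartition γ) (hμ : IsPartition μ)
    (hsum : γ.sum = μ.sum) (hhead : γ.getD 0 0 = μ.getD 0 0)
    (hdom : partialSum γ ≤ partialSum μ) (hne : γ ≠ μ) :
    ∃ a, 1 ≤ a ∧ γ.getD a 0 < γ.getD (a - 1) 0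
      ∧ partialSum γ (a + 1) < partialSum μ (a + 1) ∧ 0 < γ.getD (a + 1) 0 := by
  have hex : ∃ t, γ.getD t 0 ≠ μ.getD t 0 := not_forall.mp fun h => hne (hγ.ext_getD hμ h)
  set a := Nat.find hex
  have hdiff : γ.getD a 0 ≠ μ.getD a 0 := Nat.find_spec hex
  have hprefix : ∀ t < a, γ.getD t 0 = μ.getD t 0 := fun t ht =>
    not_not.mp (Nat.find_min hex ht)
  have hPa : partialSum γ a = partialSum μ a :=
    sum_congr rfl fun t ht => hprefix t (mem_range.mp ht)
  have ha : 1 ≤ a := Nat.one_le_iff_ne_zero.mpr fun h0 => hdiff (h0 ▸ hhead)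
  have hdom_a : partialSum γ (a + 1) ≤ partialSum μ (a + 1) := hdom _
  rw [partialSum_succ, partialSum_succ, hPa] at hdom_a
  have hlt : partialSum γ (a + 1) < partialSum μ (a + 1) := by
    rw [partialSum_succ, partialSum_succ]
    omega
  refine ⟨a, ha, ?_, hlt, ?_⟩
  · have := hprefix (a - 1) (by omega)
    have : μ.getD a 0 ≤ μ.getD (a - 1) 0 := hμ.antitone_getD (Nat.sub_le a 1)
    omega
  · -- otherwise `γ` ends at row `a`, and its sum would fall short of that of `μ`
    by_contra h0
    have hlen : γ.length ≤ a + 1 := not_lt.mp fun h => h0 (hγ.getD_pos_iff.mpr h)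
    have := partialSum_of_length_le hlen
    have := partialSum_le_sum μ (a + 1)
    omega

theorem exists_canMoveBox_partialSum_moveBox_le (hγ : IsPartition γ) (hμ : IsPartition μ)
    (hsum : γ.sum = μ.sum) (hhead : γ.getD 0 0 = μ.getD 0 0)
    (hdom : partialSum γ ≤ partialSum μ) (hne : γ ≠ μ) :
    ∃ a b, CanMoveBox γ a b ∧ partialSum (moveBox a b γ) ≤ partialSum μ := by
  obtain ⟨a, ha, haa, hlt, hpos⟩ :=
    exists_first_getD_lt_of_dominated hγ hμ hsum hhead hdom hne
  obtain ⟨b, hab, hbb, hblock⟩ := exists_getD_succ_lt_of_getD_pos hγ hpos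
  have hcan : CanMoveBox γ a b := ⟨ha, by omega, haa, hbb⟩
  have hstrict : ∀ k, a + 1 ≤ k → k ≤ b → partialSum γ k < partialSum μ k := by
    intro k hk
    induction k, hk using Nat.le_induction with
    | base => exact fun _ => hlt
    | succ k hk ih =>
      exact fun hkb => partialSum_succ_lt_of_getD_succ_eq hμ.antitone_getD hdom (ih (by omega))
        (hblock k hk (by omega))
  refine ⟨a, b, hcan, fun k => ?_⟩
  rw [partialSum_moveBox hγ.antitone_getD hcan]
  split_ifs with hk
  · exact hstrict k hk.1 hk.2
  · exact hdom k

theorem sum_range_partialSum_lt {l l' : List ℕ} (hl : IsPartition l) (hl' : IsPartition l')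
    (hsum : l.sum = l'.sum) (h : partialSum l < partialSum l') :
    ∑ k ∈ range (l.sum + 1), partialSum l k < ∑ k ∈ range (l.sum + 1), partialSum l' k := by
  obtain ⟨hle, k, hk⟩ := Pi.lt_def.mp h
  refine sum_lt_sum (fun k _ => hle k) ⟨k, mem_range.mpr ?_, hk⟩
  by_contra hk'
  have := hl.length_le_sum
  have := hl'.length_le_sum
  rw [partialSum_of_length_le (by omega), partialSum_of_length_le (by omega)] at hk
  omega

theorem reflTransGen_isElementaryMove (hγ : IsPartition γ) (hμ : IsPartition μ)
    (hsum : γ.sum = μ.sum) (hhead : γ.getD 0 0 = μ.getD 0 0)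
    (hdom : partialSum γ ≤ partialSum μ) : ReflTransGen IsElementaryMove γ μ := by
  let Φ : List ℕ → ℕ := fun l => ∑ k ∈ range (μ.sum + 1), partialSum l k
  induction hd : Φ μ - Φ γ using Nat.strong_induction_on generalizing γ with
  | _ d ih =>
    by_cases hne : γ = μ
    · rw [hne]
    obtain ⟨a, b, hcan, hdom'⟩ :=
      exists_canMoveBox_partialSum_moveBox_le hγ hμ hsum hhead hdom hne
    have hsum' := sum_moveBox hγ.antitone_getD hcan
    have hlt : Φ γ < Φ (moveBox a b γ) := by
      have := sum_range_partialSum_lt hγ (hγ.moveBox hcan) hsum'.symm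
        (partialSum_lt_partialSum_moveBox hγ.antitone_getD hcan)
      rwa [hsum] at this
    have hle : Φ (moveBox a b γ) ≤ Φ μ := sum_le_sum fun k _ => hdom' k
    exact .head ((isElementaryMove_iff hγ).mpr ⟨a, b, hcan, rfl⟩)
      (ih _ (by omega) (hγ.moveBox hcan) (hsum'.trans hsum)
        ((getD_zero_moveBox hγ.antitone_getD hcan).trans hhead) hdom' rfl)

end Dominance

theorem Relation.ReflTransGen.exists_seq {α : Type*} {r : α → α → Prop} {a b : α}
    (h : ReflTransGen r a b) :
    ∃ (t : ℕ) (g : ℕ → α), g 0 = a ∧ g t = b ∧ ∀ q < t, r (g q) (g (q + 1)) := by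
  induction h with
  | refl => exact ⟨0, fun _ => a, rfl, rfl, by simp⟩
  | @tail c d _ hcd ih =>
    obtain ⟨t, g, h0, ht, hg⟩ := ih
    refine ⟨t + 1, Function.update g (t + 1) d, by simp [h0], by simp, fun q hq => ?_⟩
    rcases Nat.lt_succ_iff_lt_or_eq.mp hq with hq | rfl
    · simpa [Function.update_of_ne (by omega : q ≠ t + 1),
        Function.update_of_ne (by omega : q + 1 ≠ t + 1)] using hg q hq
    · simpa [Function.update_of_ne (by omega : q ≠ q + 1), ht] using hcd

theorem stmt18_general
    (n : Nat)
    (lam lam' : List Nat) (hlam : IsPartition lam) (hlam' : IsPartition lam')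
    (hsum : lam.sum = n) (hsum' : lam'.sum = n)
    (hhead : lam.headD 0 = lam'.headD 0)
    (hdom : ∀ k : Nat, ∑ t ∈ Finset.range k, lam.getD t 0 ≤ ∑ t ∈ Finset.range k, lam'.getD t 0) :
    ∃ (t : Nat) (g : Nat → List Nat), g 0 = lam ∧ g t = lam'
      ∧ (∀ q ≤ t, IsPartition (g q) ∧ (g q).sum = n ∧ (g q).headD 0 = lam.headD 0)
      ∧ (∀ q < t, ∃ i j : Nat, 2 ≤ i ∧ i < j ∧ j ≤ (g q).length
          ∧ (g q).getD (i - 1) 0 < (g q).getD (i - 2) 0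
          ∧ (j = (g q).length ∨ (g q).getD j 0 < (g q).getD (j - 1) 0)
          ∧ g (q + 1) = downAt j (upAt i (g q))) := by
  have hreach := reflTransGen_isElementaryMove hlam hlam' (hsum.trans hsum'.symm)
    (by simpa only [List.headD_eq_getD] using hhead) hdom
  obtain ⟨t, g, hg0, hgt, hmove⟩ := hreach.exists_seq
  refine ⟨t, g, hg0, hgt, fun q hq => ?_, hmove⟩
  induction q with
  | zero => rw [hg0]; exact ⟨hlam, hsum, rfl⟩
  | succ q ih =>
    obtain ⟨hpart, hs, hh⟩ := ih (by omega)
    have hm : IsElementaryMove (g q) (g (q + 1)) := hmove q (by omega)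
    refine ⟨hm.isPartition hpart, (hm.sum_eq hpart).trans hs, ?_⟩
    simpa only [List.headD_eq_getD, hm.getD_zero_eq hpart] using hh

theorem stmt18
    (n : Nat)
    (lam lam' : List Nat) (hlam : IsPartition lam) (hlam' : IsPartition lam')
    (hsum : lam.sum = n) (hsum' : lam'.sum = n)
    (hhead : lam.headD 0 = lam'.headD 0)
    (hdom : ∀ k : Nat, ∑ t ∈ Finset.range k, lam.getD t 0 ≤ ∑ t ∈ Finset.range k, lam'.getD t 0)
    (hne : lam ≠ lam') :
    ∃ (t : Nat) (g : Nat → List Nat), g 0 = lam ∧ g t = lam'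
      ∧ (∀ q ≤ t, IsPartition (g q) ∧ (g q).sum = n ∧ (g q).headD 0 = lam.headD 0)
      ∧ (∀ q < t, ∃ i j : Nat, 2 ≤ i ∧ i < j ∧ j ≤ (g q).length
          ∧ (g q).getD (i - 1) 0 < (g q).getD (i - 2) 0
          ∧ (j = (g q).length ∨ (g q).getD j 0 < (g q).getD (j - 1) 0)
          ∧ g (q + 1) = downAt j (upAt i (g q))) :=
  stmt18_general n lam lam' hlam hlam' hsum hsum' hhead hdom
end
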